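/- Let μ be a finite measure on a measurable space (T, Σ), X a Banach space, and θ a Young function satisfying the Δ₂-condition. Then the Luxemburg norm on H^θ(μ,X) is absolutely continuous: for every strongly measurable f : T → X with ‖f‖_{θ,μ} < ∞ and every decreasing sequence (G_n) of sets in Σ with μ(G_n) → 0, one has ‖f·1_{G_n}‖_{θ,μ} → 0 as n → ∞. -/

import Mathlib

open MeasureTheory Filter Set

/-! Fix any `c > 0` admissible for `f` in the Luxemburg infimum. Iterating Δ₂ gives, for every
`ε > 0`, a constant `C` with `θ(‖f‖/ε) ≤ C θ(‖f‖/c)`, so `θ(‖f‖/ε)` has finite integral. By absolute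
continuity of the Lebesgue integral its integral over `Gₙ` is eventually `≤ 1`, which says that
`‖f·1_{Gₙ}‖_{θ,μ} ≤ ε` for large `n`. -/

/-- A Young function: `θ u = ∫₀ᵘ χ(t) dt` for some non-decreasing, left-continuous
`χ : [0,∞) → [0,∞)` with `χ 0 = 0` which is not identically zero. -/
def IsYoungFunction (θ : ℝ → ℝ) : Prop :=
  ∃ χ : ℝ → ℝ,
    (∀ t, 0 ≤ t → 0 ≤ χ t) ∧
    (∀ s t, 0 ≤ s → s ≤ t → χ s ≤ χ t) ∧
    (∀ t, 0 < t → Tendsto χ (nhdsWithin t (Set.Iio t)) (nhds (χ t))) ∧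
    χ 0 = 0 ∧
    (∃ t, 0 ≤ t ∧ χ t ≠ 0) ∧
    (∀ u, 0 ≤ u → θ u = ∫ t in (0:ℝ)..u, χ t)

/-- The Δ₂-condition: there is `k > 0` with `θ(2t) ≤ k·θ(t)` for all `t ≥ 0`. -/
def Delta2 (θ : ℝ → ℝ) : Prop :=
  ∃ k : ℝ, 0 < k ∧ ∀ t, 0 ≤ t → θ (2 * t) ≤ k * θ t

/-- The Luxemburg norm of `f` with respect to the Young function `θ` and the measure
`μ` : `inf {k > 0 : ∫ θ(‖f‖/k) dμ ≤ 1}`. -/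
noncomputable def luxNorm {T X : Type*} [MeasurableSpace T] [NormedAddCommGroup X]
    (θ : ℝ → ℝ) (μ : Measure T) (f : T → X) : ENNReal :=
  sInf {k : ENNReal | 0 < k ∧ k ≠ ⊤ ∧
    ∫⁻ t, ENNReal.ofReal (θ (‖f t‖ / k.toReal)) ∂μ ≤ 1}

namespace IsYoungFunction

variable {θ : ℝ → ℝ}

theorem map_zero (hθ : IsYoungFunction θ) : θ 0 = 0 := by
  obtain ⟨χ, -, -, -, -, -, hθχ⟩ := hθ
  rw [hθχ 0 le_rfl, intervalIntegral.integral_same]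

theorem monotoneOn (hθ : IsYoungFunction θ) : MonotoneOn θ (Ici 0) := by
  obtain ⟨χ, hχ_nonneg, hχ_mono, -, -, -, hθχ⟩ := hθ
  intro u (hu : 0 ≤ u) v (hv : 0 ≤ v) huv
  have hχ_int : IntervalIntegrable χ volume 0 v := by
    refine MonotoneOn.intervalIntegrable fun s hs t ht hst => hχ_mono s t ?_ hst
    rw [uIcc_of_le hv] at hs
    exact hs.1
  rw [hθχ u hu, hθχ v hv]
  refine intervalIntegral.integral_mono_interval le_rfl hu huv ?_ hχ_int
  filter_upwards [ae_restrict_mem measurableSet_Ioc] with t ht using hχ_nonneg t ht.1.le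

end IsYoungFunction

namespace Delta2

variable {θ : ℝ → ℝ}

theorem le_pow_mul (hΔ : Delta2 θ) : ∃ k : ℝ, 0 < k ∧ ∀ m : ℕ, ∀ t, 0 ≤ t →
    θ (2 ^ m * t) ≤ k ^ m * θ t := by
  obtain ⟨k, hk, hΔk⟩ := hΔ
  refine ⟨k, hk, fun m => ?_⟩
  induction m with
  | zero => simp
  | succ m ih =>
    intro t ht
    calc θ (2 ^ (m + 1) * t) = θ (2 * (2 ^ m * t)) := by ring_nf
      _ ≤ k * θ (2 ^ m * t) := hΔk _ (by positivity)
      _ ≤ k * (k ^ m * θ t) := mul_le_mul_of_nonneg_left (ih t ht) hk.le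
      _ = k ^ (m + 1) * θ t := by ring

theorem exists_le_const_mul (hΔ : Delta2 θ) (hmono : MonotoneOn θ (Ici 0)) {r : ℝ}
    (hr : 0 ≤ r) : ∃ C : ℝ, 0 ≤ C ∧ ∀ t, 0 ≤ t → θ (r * t) ≤ C * θ t := by
  obtain ⟨k, hk, hpow⟩ := hΔ.le_pow_mul
  obtain ⟨m, hm⟩ := pow_unbounded_of_one_lt r (one_lt_two (α := ℝ))
  refine ⟨k ^ m, by positivity, fun t ht => ?_⟩
  calc θ (r * t) ≤ θ (2 ^ m * t) :=
        hmono (mul_nonneg hr ht) (mul_nonneg (by positivity) ht)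
          (mul_le_mul_of_nonneg_right hm.le ht)
    _ ≤ k ^ m * θ t := hpow m t ht

end Delta2

section Luxemburg

variable {T X : Type*} [MeasurableSpace T] [NormedAddCommGroup X] {μ : Measure T} {θ : ℝ → ℝ}

/-- `luxNorm θ μ f` is the infimum of the `c > 0` with `orliczModular θ μ f c ≤ 1`. -/
noncomputable def orliczModular (θ : ℝ → ℝ) (μ : Measure T) (f : T → X) (c : ℝ) : ENNReal :=
  ∫⁻ t, ENNReal.ofReal (θ (‖f t‖ / c)) ∂μ

theorem luxNorm_le_of_orliczModular_le_one {f : T → X} {ε : ENNReal} (hε : 0 < ε)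
    (hε_top : ε ≠ ⊤) (h : orliczModular θ μ f ε.toReal ≤ 1) : luxNorm θ μ f ≤ ε :=
  sInf_le ⟨hε, hε_top, h⟩

theorem exists_orliczModular_le_one_of_luxNorm_lt_top {f : T → X} (hf : luxNorm θ μ f < ⊤) :
    ∃ c : ℝ, 0 < c ∧ orliczModular θ μ f c ≤ 1 := by
  obtain ⟨k, hk, hk_top, hmod⟩ : {k : ENNReal | 0 < k ∧ k ≠ ⊤ ∧
      ∫⁻ t, ENNReal.ofReal (θ (‖f t‖ / k.toReal)) ∂μ ≤ 1}.Nonempty := by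
    by_contra h
    rw [not_nonempty_iff_eq_empty] at h
    rw [luxNorm, h, sInf_empty] at hf
    exact lt_irrefl _ hf
  exact ⟨k.toReal, ENNReal.toReal_pos hk.ne' hk_top, hmod⟩

theorem orliczModular_ne_top_of_luxNorm_lt_top (hΔ : Delta2 θ) (hmono : MonotoneOn θ (Ici 0))
    {f : T → X} (hf : luxNorm θ μ f < ⊤) {ε : ℝ} (hε : 0 < ε) :
    orliczModular θ μ f ε ≠ ⊤ := by
  obtain ⟨c, hc, hmod⟩ := exists_orliczModular_le_one_of_luxNorm_lt_top hf
  obtain ⟨C, hC, hθC⟩ := hΔ.exists_le_const_mul hmono (div_nonneg hc.le hε.le)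
  have hpointwise : ∀ t, ENNReal.ofReal (θ (‖f t‖ / ε)) ≤
      ENNReal.ofReal C * ENNReal.ofReal (θ (‖f t‖ / c)) := fun t => by
    rw [← ENNReal.ofReal_mul hC]
    refine ENNReal.ofReal_le_ofReal ?_
    calc θ (‖f t‖ / ε) = θ (c / ε * (‖f t‖ / c)) := by field_simp
      _ ≤ C * θ (‖f t‖ / c) := hθC _ (by positivity)
  refine ne_top_of_le_ne_top ?_ ((lintegral_mono hpointwise).trans_eq (lintegral_const_mul' _ _
    ENNReal.ofReal_ne_top))
  exact ENNReal.mul_ne_top ENNReal.ofReal_ne_top (ne_top_of_le_ne_top ENNReal.one_ne_top hmod)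

theorem orliczModular_indicator_le (hθ0 : θ 0 = 0) (f : T → X) (s : Set T) (c : ℝ) :
    orliczModular θ μ (s.indicator f) c ≤ ∫⁻ t in s, ENNReal.ofReal (θ (‖f t‖ / c)) ∂μ := by
  have hindicator : (fun t => ENNReal.ofReal (θ (‖s.indicator f t‖ / c))) =
      s.indicator fun t => ENNReal.ofReal (θ (‖f t‖ / c)) := by
    ext t
    by_cases ht : t ∈ s <;> simp [ht, hθ0]
  rw [orliczModular, hindicator]
  exact lintegral_indicator_le _ s

end Luxemburg

theorem luxNorm_indicator_tendsto_zero_general {T X : Type*} [MeasurableSpace T]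
    [NormedAddCommGroup X]
    (μ : Measure T)
    (θ : ℝ → ℝ) (hθ : IsYoungFunction θ) (hΔ : Delta2 θ)
    (f : T → X) (hfin : luxNorm θ μ f < ⊤)
    (G : ℕ → Set T)
    (hG0 : Tendsto (fun n => μ (G n)) atTop (nhds 0)) :
    Tendsto (fun n => luxNorm θ μ ((G n).indicator f)) atTop (nhds 0) := by
  rw [ENNReal.tendsto_nhds_zero]
  intro ε hε
  rcases eq_or_ne ε ⊤ with rfl | hε_top
  · exact Eventually.of_forall fun _ => le_top
  have hmod_fin := orliczModular_ne_top_of_luxNorm_lt_top hΔ hθ.monotoneOn hfin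
    (ENNReal.toReal_pos hε.ne' hε_top)
  have hmod_G := tendsto_setLIntegral_zero hmod_fin hG0
  filter_upwards [ENNReal.tendsto_nhds_zero.mp hmod_G 1 one_pos] with n hn
  exact luxNorm_le_of_orliczModular_le_one hε hε_top
    ((orliczModular_indicator_le hθ.map_zero f (G n) _).trans hn)

/-- For a finite measure and a Young function satisfying Δ₂, the Luxemburg norm on
`H^θ(μ,X)` is absolutely continuous: if `(Gₙ)` is a decreasing sequence of measurable sets
with `μ(Gₙ) → 0`, then `‖f·1_{Gₙ}‖_{θ,μ} → 0`. -/
theorem luxNorm_indicator_tendsto_zero {T X : Type*} [MeasurableSpace T]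
    [NormedAddCommGroup X] [NormedSpace ℝ X] [CompleteSpace X]
    (μ : Measure T) [IsFiniteMeasure μ]
    (θ : ℝ → ℝ) (hθ : IsYoungFunction θ) (hΔ : Delta2 θ)
    (f : T → X) (hmeas : StronglyMeasurable f) (hfin : luxNorm θ μ f < ⊤)
    (G : ℕ → Set T) (hGmeas : ∀ n, MeasurableSet (G n))
    (hGmono : ∀ n, G (n + 1) ⊆ G n)
    (hG0 : Tendsto (fun n => μ (G n)) atTop (nhds 0)) :
    Tendsto (fun n => luxNorm θ μ ((G n).indicator f)) atTop (nhds 0) :=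
  luxNorm_indicator_tendsto_zero_general μ θ hθ hΔ f hfin G hG0
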